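/- The function μ(z) = F(z)/F(z⁴) is strictly monotone increasing for z ∈ [0,1). -/

import Mathlib

/-!
Write `μ = F(z)/F(z⁴)`. Dividing the functional equation by `F(z⁴)` gives
`μ(z) = 1 + z + z² - z⁴/μ(z⁴)`, and the coefficient bounds give `1 - z ≤ μ(z)`.
From this the recursion bootstraps to `1 + z ≤ μ(z)`, starting near `0` and moving
outwards along `z ↦ z^{1/4}`. For `x < y` the recursion then yields
`μ(y) - μ(x) = A + B (μ(y⁴) - μ(x⁴))` with `A > 0` and `0 ≤ B ≤ 1/2`; since the
differences along `xᵢ = x^{4^i}`, `yᵢ = y^{4^i}` are bounded below, such a contraction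
forces all of them to be nonnegative, and then `μ(y) - μ(x) > 0`.
-/

open Set

lemma pow_mem_Ico_zero_one {z : ℝ} (hz : z ∈ Ico (0 : ℝ) 1) {n : ℕ} (hn : n ≠ 0) :
    z ^ n ∈ Ico (0 : ℝ) 1 :=
  ⟨pow_nonneg hz.1 n, pow_lt_one₀ hz.1 hz.2 hn⟩

lemma one_le_of_hasSum_of_nonneg {c : ℕ → ℝ} {z s : ℝ} (hc : ∀ n, 0 ≤ c n) (h0 : c 0 = 1)
    (hz : 0 ≤ z) (hs : HasSum (fun n => c n * z ^ n) s) : 1 ≤ s := by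
  simpa [h0] using le_hasSum hs 0 fun n _ => mul_nonneg (hc n) (pow_nonneg hz n)

lemma le_inv_one_sub_of_hasSum_of_le_one {c : ℕ → ℝ} {z s : ℝ} (hc : ∀ n, c n ≤ 1)
    (hz : z ∈ Ico (0 : ℝ) 1) (hs : HasSum (fun n => c n * z ^ n) s) : s ≤ (1 - z)⁻¹ :=
  hasSum_le (fun n => mul_le_of_le_one_left (pow_nonneg hz.1 n) (hc n)) hs
    (hasSum_geometric_of_lt_one hz.1 hz.2)

lemma nonneg_of_mul_succ_le {D B : ℕ → ℝ} {q : ℝ} (hq : q < 1) (hB : ∀ j, 0 ≤ B j)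
    (hBq : ∀ j, B j ≤ q) (hD : ∀ j, B j * D (j + 1) ≤ D j) (hbdd : BddBelow (range D))
    (j : ℕ) : 0 ≤ D j := by
  set s := ⨅ j, D j
  suffices hs : 0 ≤ s from hs.trans (ciInf_le hbdd j)
  by_contra! hs
  have : q * s ≤ s := le_ciInf fun j =>
    calc q * s ≤ B j * s := mul_le_mul_of_nonpos_right (hBq j) hs.le
      _ ≤ B j * D (j + 1) := mul_le_mul_of_nonneg_left (ciInf_le hbdd _) (hB j)
      _ ≤ D j := hD j
  nlinarith

lemma rec_sub_rec_eq {x y a b : ℝ} (ha : a ≠ 0) (hb : b ≠ 0) :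
    (1 + y + y ^ 2 - y ^ 4 / b) - (1 + x + x ^ 2 - x ^ 4 / a)
      = ((y - x) * (1 + x + y) - (y ^ 4 - x ^ 4) / b) + x ^ 4 / (a * b) * (b - a) := by
  field_simp
  ring

lemma pow_four_sub_div_lt {x y m : ℝ} (hx : 0 ≤ x) (hxy : x < y) (hm : 1 + y ^ 4 ≤ m) :
    (y ^ 4 - x ^ 4) / m < (y - x) * (1 + x + y) := by
  have hy : 0 < y := hx.trans_lt hxy
  have hm₀ : 0 < 1 + y ^ 4 := by positivity
  have hsq : x ^ 2 + y ^ 2 ≤ 1 + y ^ 4 := by nlinarith [sq_nonneg (y ^ 2 - 1)]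
  calc (y ^ 4 - x ^ 4) / m ≤ (y ^ 4 - x ^ 4) / (1 + y ^ 4) := by
        gcongr
        exact sub_nonneg.2 (pow_le_pow_left₀ hx hxy.le 4)
    _ = (y - x) * (x + y) * ((x ^ 2 + y ^ 2) / (1 + y ^ 4)) := by
        field_simp
        ring
    _ ≤ (y - x) * (x + y) * 1 := by
        gcongr
        exact (div_le_one hm₀).2 hsq
    _ < (y - x) * (1 + x + y) := by nlinarith

section Recursion

variable {μ : ℝ → ℝ}

lemma one_add_le_of_sq_le (hrec : ∀ z ∈ Ico (0 : ℝ) 1, μ z = 1 + z + z ^ 2 - z ^ 4 / μ (z ^ 4))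
    {z : ℝ} (hz : z ∈ Ico (0 : ℝ) 1) (h : z ^ 2 ≤ μ (z ^ 4)) : 1 + z ≤ μ z := by
  have : z ^ 4 / μ (z ^ 4) ≤ z ^ 2 :=
    div_le_of_le_mul₀ ((sq_nonneg z).trans h) (sq_nonneg z) (by nlinarith [sq_nonneg z])
  linarith [hrec z hz]

lemma one_add_le_of_one_sub_le
    (hrec : ∀ z ∈ Ico (0 : ℝ) 1, μ z = 1 + z + z ^ 2 - z ^ 4 / μ (z ^ 4))
    (hlow : ∀ z ∈ Ico (0 : ℝ) 1, 1 - z ≤ μ z) {z : ℝ} (hz : z ∈ Ico (0 : ℝ) 1) :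
    1 + z ≤ μ z := by
  obtain ⟨k, hk⟩ := exists_pow_lt_of_lt_one (by norm_num : (0 : ℝ) < 1 / 2) hz.2
  have hzk : z ^ 4 ^ k ≤ 1 / 2 :=
    (pow_le_pow_of_le_one hz.1 hz.2.le (Nat.lt_pow_self (by norm_num)).le).trans hk.le
  clear hk
  induction k generalizing z with
  | zero =>
    refine one_add_le_of_sq_le hrec hz ?_
    have hz2 : z ^ 2 ≤ 1 / 4 := by nlinarith [hz.1, pow_one z ▸ hzk]
    nlinarith [hlow _ (pow_mem_Ico_zero_one hz four_ne_zero), sq_nonneg z]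
  | succ k ih =>
    refine one_add_le_of_sq_le hrec hz ?_
    have := ih (pow_mem_Ico_zero_one hz four_ne_zero) (by rwa [← pow_mul, ← pow_succ'])
    nlinarith [sq_nonneg (z ^ 2 - 1)]

lemma le_one_add_add_sq (hrec : ∀ z ∈ Ico (0 : ℝ) 1, μ z = 1 + z + z ^ 2 - z ^ 4 / μ (z ^ 4))
    (hlow : ∀ z ∈ Ico (0 : ℝ) 1, 1 + z ≤ μ z) {z : ℝ} (hz : z ∈ Ico (0 : ℝ) 1) :
    μ z ≤ 1 + z + z ^ 2 := by
  have hz4 := pow_mem_Ico_zero_one hz four_ne_zero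
  have : 0 ≤ z ^ 4 / μ (z ^ 4) := div_nonneg hz4.1 (by linarith [hlow _ hz4, hz4.1])
  linarith [hrec z hz]

lemma exists_mul_sub_lt_sub
    (hrec : ∀ z ∈ Ico (0 : ℝ) 1, μ z = 1 + z + z ^ 2 - z ^ 4 / μ (z ^ 4))
    (hlow : ∀ z ∈ Ico (0 : ℝ) 1, 1 + z ≤ μ z) {x y : ℝ} (hx : x ∈ Ico (0 : ℝ) 1)
    (hy : y ∈ Ico (0 : ℝ) 1) (hxy : x < y) :
    ∃ B, 0 ≤ B ∧ B ≤ 1 / 2 ∧ B * (μ (y ^ 4) - μ (x ^ 4)) < μ y - μ x := by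
  have hx4 := pow_mem_Ico_zero_one hx four_ne_zero
  have hy4 := pow_mem_Ico_zero_one hy four_ne_zero
  have ha := hlow _ hx4
  have hb := hlow _ hy4
  have ha₀ : 0 < μ (x ^ 4) := by linarith [hx4.1]
  have hb₁ : 1 ≤ μ (y ^ 4) := by linarith [hy4.1]
  refine ⟨x ^ 4 / (μ (x ^ 4) * μ (y ^ 4)), by positivity, ?_, ?_⟩
  · rw [div_le_iff₀ (by positivity)]
    nlinarith [hx4.2]
  · rw [hrec x hx, hrec y hy, rec_sub_rec_eq ha₀.ne' (by positivity)]
    linarith [pow_four_sub_div_lt hx.1 hxy hb]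

theorem strictMonoOn_of_rec
    (hrec : ∀ z ∈ Ico (0 : ℝ) 1, μ z = 1 + z + z ^ 2 - z ^ 4 / μ (z ^ 4))
    (hlow : ∀ z ∈ Ico (0 : ℝ) 1, 1 + z ≤ μ z) : StrictMonoOn μ (Ico 0 1) := by
  intro x hx y hy hxy
  have hmem : ∀ {z} (hz : z ∈ Ico (0 : ℝ) 1) (j : ℕ), z ^ 4 ^ j ∈ Ico (0 : ℝ) 1 :=
    fun hz j => pow_mem_Ico_zero_one hz (by positivity)
  have hstep : ∀ j, ∃ B, 0 ≤ B ∧ B ≤ 1 / 2 ∧ B * (μ (y ^ 4 ^ (j + 1)) - μ (x ^ 4 ^ (j + 1)))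
      < μ (y ^ 4 ^ j) - μ (x ^ 4 ^ j) := fun j => by
    simpa only [pow_succ, pow_mul] using exists_mul_sub_lt_sub hrec hlow (hmem hx j) (hmem hy j)
      (pow_lt_pow_left₀ hxy hx.1 (by positivity))
  choose B hB₀ hB hD using hstep
  have hbdd : BddBelow (range fun j => μ (y ^ 4 ^ j) - μ (x ^ 4 ^ j)) := by
    refine ⟨-2, forall_mem_range.2 fun j => ?_⟩
    have := le_one_add_add_sq hrec hlow (hmem hx j)
    nlinarith [hlow _ (hmem hy j), (hmem hx j).2, (hmem hy j).1, (hmem hx j).1]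
  have h₁ := nonneg_of_mul_succ_le (by norm_num) hB₀ hB (fun j => (hD j).le) hbdd 1
  have h₀ := hD 0
  simp only [zero_add, pow_zero, pow_one] at h₀ h₁
  linarith [mul_nonneg (hB₀ 0) h₁]

end Recursion

/-- The function `μ(z) = F(z)/F(z⁴)` is strictly monotone increasing on `[0,1)`. -/
theorem stmt_9 (c : ℕ → ℝ) (F : ℝ → ℝ)
    (hc : ∀ n, c n = 0 ∨ c n = 1) (h0 : c 0 = 1)
    (hF : ∀ z : ℝ, |z| < 1 → HasSum (fun n => c n * z ^ n) (F z))
    (heq : ∀ z : ℝ, 0 ≤ z → z < 1 →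
      F z = (1 + z + z ^ 2) * F (z ^ 4) - z ^ 4 * F (z ^ 16)) :
    StrictMonoOn (fun z => F z / F (z ^ 4)) (Set.Ico (0 : ℝ) 1) := by
  have hsum : ∀ z ∈ Ico (0 : ℝ) 1, HasSum (fun n => c n * z ^ n) (F z) :=
    fun z hz => hF z (by rw [abs_of_nonneg hz.1]; exact hz.2)
  have hc₀₁ : ∀ n, 0 ≤ c n ∧ c n ≤ 1 := fun n => by rcases hc n with h | h <;> simp [h]
  have hF₁ : ∀ z ∈ Ico (0 : ℝ) 1, 1 ≤ F z := fun z hz =>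
    one_le_of_hasSum_of_nonneg (fun n => (hc₀₁ n).1) h0 hz.1 (hsum z hz)
  have hFle : ∀ z ∈ Ico (0 : ℝ) 1, F z ≤ (1 - z)⁻¹ := fun z hz =>
    le_inv_one_sub_of_hasSum_of_le_one (fun n => (hc₀₁ n).2) hz (hsum z hz)
  have hrec : ∀ z ∈ Ico (0 : ℝ) 1, F z / F (z ^ 4)
      = 1 + z + z ^ 2 - z ^ 4 / (F (z ^ 4) / F ((z ^ 4) ^ 4)) := by
    intro z hz
    have h4 := hF₁ _ (pow_mem_Ico_zero_one hz four_ne_zero)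
    rw [heq z hz.1 hz.2, ← pow_mul]
    field_simp
  have hlow : ∀ z ∈ Ico (0 : ℝ) 1, 1 - z ≤ F z / F (z ^ 4) := by
    intro z hz
    have hz4 := pow_mem_Ico_zero_one hz four_ne_zero
    have h4 := hF₁ _ hz4
    calc 1 - z ≤ 1 - z ^ 4 := by nlinarith [pow_le_of_le_one hz.1 hz.2.le four_ne_zero]
      _ ≤ (F (z ^ 4))⁻¹ := (le_inv_comm₀ (sub_pos.2 hz4.2) (by positivity)).2 (hFle _ hz4)
      _ ≤ F z / F (z ^ 4) := by
        rw [div_eq_mul_inv]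
        exact le_mul_of_one_le_left (by positivity) (hF₁ z hz)
  exact strictMonoOn_of_rec hrec fun z hz => one_add_le_of_one_sub_le hrec hlow hz
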